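/- Let M be a graded A-module and T ⊊ K proper graded A-submodules of M. If T is a graded classical weakly prime A-submodule of M and K/T is a graded classical weakly prime A-submodule of M/T, then K is a graded classical weakly prime A-submodule of M. -/

import Mathlib

/-!
Let `x, y` be homogeneous and `L` graded with `0 ≠ xAyL ⊆ K`. If `xAyL ⊆ T`, the weak primeness
of `T ⊆ K` settles it. Otherwise some `(x a y) • l ∉ T`, so `xAy(L/T)` is nonzero in `M/T` and lies
in `K/T`; since `T ≤ K`, membership in `K/T` lifts back to membership in `K`.
-/

section GCWP

variable {G : Type*} [AddGroup G] [DecidableEq G]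
variable {A : Type*} [Ring A] {M : Type*} [AddCommGroup M] [Module A M]

/-- A submodule is graded (homogeneous) if it is generated by its homogeneous elements. -/
def IsGrSub (ℳ : G → AddSubgroup M) (K : Submodule A M) : Prop :=
  K ≤ Submodule.span A ((K : Set M) ∩ {m | SetLike.IsHomogeneousElem ℳ m})

/-- `K` is a graded classical weakly prime submodule. -/
def IsGCWP (𝒜 : G → AddSubgroup A) (ℳ : G → AddSubgroup M) (K : Submodule A M) : Prop :=
  K ≠ ⊤ ∧ IsGrSub ℳ K ∧
  ∀ x y : A, SetLike.IsHomogeneousElem 𝒜 x → SetLike.IsHomogeneousElem 𝒜 y →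
    ∀ L : Submodule A M, IsGrSub ℳ L →
      (∃ a : A, ∃ l ∈ L, (x * a * y) • l ≠ 0) →
      (∀ a : A, ∀ l ∈ L, (x * a * y) • l ∈ K) →
      (∀ l ∈ L, x • l ∈ K) ∨ (∀ l ∈ L, y • l ∈ K)

/-- `K` is a graded classical prime submodule. -/
def IsGCP (𝒜 : G → AddSubgroup A) (ℳ : G → AddSubgroup M) (K : Submodule A M) : Prop :=
  K ≠ ⊤ ∧ IsGrSub ℳ K ∧
  ∀ x y : A, SetLike.IsHomogeneousElem 𝒜 x → SetLike.IsHomogeneousElem 𝒜 y →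
    ∀ L : Submodule A M, IsGrSub ℳ L →
      (∀ a : A, ∀ l ∈ L, (x * a * y) • l ∈ K) →
      (∀ l ∈ L, x • l ∈ K) ∨ (∀ l ∈ L, y • l ∈ K)

/-- `(x, y, L)` is a graded classical triple zero of `K`. -/
def TripleZero (K : Submodule A M) (x y : A) (L : Submodule A M) : Prop :=
  (∀ a : A, ∀ l ∈ L, (x * a * y) • l = 0) ∧
    ¬ (∀ l ∈ L, x • l ∈ K) ∧ ¬ (∀ l ∈ L, y • l ∈ K)

/-- `L` is an `A_e`-submodule of `M_g` (as an additive subgroup of `M`). -/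
def IsAeSub (𝒜 : G → AddSubgroup A) (ℳ : G → AddSubgroup M) (g : G) (L : AddSubgroup M) : Prop :=
  (L : Set M) ⊆ (ℳ g : Set M) ∧ ∀ a ∈ 𝒜 0, ∀ l ∈ L, a • l ∈ L

/-- `L` is a faithful `A_e`-module. -/
def AeFaithful (𝒜 : G → AddSubgroup A) (L : AddSubgroup M) : Prop :=
  ∀ a ∈ 𝒜 0, (∀ l ∈ L, a • l = 0) → a = 0

/-- `I` is an ideal of `A_e` (as an additive subgroup of `A`). -/
def IsAeIdeal (𝒜 : G → AddSubgroup A) (I : AddSubgroup A) : Prop :=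
  (I : Set A) ⊆ (𝒜 0 : Set A) ∧ ∀ a ∈ 𝒜 0, ∀ r ∈ I, a * r ∈ I ∧ r * a ∈ I

/-- `K` is a `g`-classical weakly prime submodule of `M`. -/
def IsgCWP (𝒜 : G → AddSubgroup A) (ℳ : G → AddSubgroup M) (g : G) (K : Submodule A M) :
    Prop :=
  IsGrSub ℳ K ∧ ¬ ((ℳ g : Set M) ⊆ (K : Set M)) ∧
  ∀ x ∈ 𝒜 0, ∀ y ∈ 𝒜 0, ∀ L : AddSubgroup M, IsAeSub 𝒜 ℳ g L →
    (∃ a ∈ 𝒜 0, ∃ l ∈ L, (x * a * y) • l ≠ 0) →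
    (∀ a ∈ 𝒜 0, ∀ l ∈ L, (x * a * y) • l ∈ K) →
    (∀ l ∈ L, x • l ∈ K) ∨ (∀ l ∈ L, y • l ∈ K)

/-- `P` is a weakly prime (proper) left ideal of `A_e`, given as a subset of `A`. -/
def IsWeaklyPrimeAe (𝒜 : G → AddSubgroup A) (P : Set A) : Prop :=
  P ⊆ (𝒜 0 : Set A) ∧ ¬ ((𝒜 0 : Set A) ⊆ P) ∧
  (0 : A) ∈ P ∧ (∀ p ∈ P, ∀ q ∈ P, p + q ∈ P) ∧ (∀ p ∈ P, -p ∈ P) ∧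
  (∀ a ∈ 𝒜 0, ∀ p ∈ P, a * p ∈ P) ∧
  ∀ I J : AddSubgroup A, IsAeIdeal 𝒜 I → IsAeIdeal 𝒜 J →
    (∃ i ∈ I, ∃ j ∈ J, i * j ≠ 0) → (∀ i ∈ I, ∀ j ∈ J, i * j ∈ P) →
    (I : Set A) ⊆ P ∨ (J : Set A) ⊆ P

end GCWP

section GW2A
variable {G : Type*} [AddGroup G] [DecidableEq G]
variable {A : Type*} [Ring A] {M : Type*} [AddCommGroup M] [Module A M]

/-- `K` is a graded weakly 2-absorbing submodule. -/
def IsGW2A (𝒜 : G → AddSubgroup A) (ℳ : G → AddSubgroup M) (K : Submodule A M) : Prop :=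
  K ≠ ⊤ ∧ IsGrSub ℳ K ∧
  ∀ x y : A, SetLike.IsHomogeneousElem 𝒜 x → SetLike.IsHomogeneousElem 𝒜 y →
    ∀ L : Submodule A M, IsGrSub ℳ L →
      (∃ a : A, ∃ l ∈ L, (x * a * y) • l ≠ 0) →
      (∀ a : A, ∀ l ∈ L, (x * a * y) • l ∈ K) →
      (∀ l ∈ L, x • l ∈ K) ∨ (∀ l ∈ L, y • l ∈ K) ∨
        (∀ a : A, ∀ m : M, (x * a * y) • m ∈ K)

end GW2A

section Theorems
section Quotient

variable {G : Type*} {A : Type*} [Ring A] {M N : Type*} [AddCommGroup M] [Module A M]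
  [AddCommGroup N] [Module A N]

theorem IsGrSub.map {ℳ : G → AddSubgroup M} {L : Submodule A M} (hL : IsGrSub ℳ L)
    (f : M →ₗ[A] N) : IsGrSub (fun g => (ℳ g).map f.toAddMonoidHom) (L.map f) := by
  have hspan := Submodule.map_mono (f := f) hL
  rw [Submodule.map_span] at hspan
  refine hspan.trans (Submodule.span_mono ?_)
  rintro _ ⟨m, ⟨hmL, g, hmg⟩, rfl⟩
  exact ⟨⟨m, hmL, rfl⟩, g, ⟨m, hmg, rfl⟩⟩

theorem Submodule.mkQ_mem_map_mkQ_iff {T K : Submodule A M} (hTK : T ≤ K) (m : M) :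
    T.mkQ m ∈ K.map T.mkQ ↔ m ∈ K := by
  rw [← Submodule.mem_comap, Submodule.comap_map_mkQ, sup_eq_right.mpr hTK]

theorem Submodule.forall_smul_mem_map_mkQ_iff {T K : Submodule A M} (hTK : T ≤ K)
    (L : Submodule A M) (r : A) :
    (∀ l ∈ L.map T.mkQ, r • l ∈ K.map T.mkQ) ↔ ∀ l ∈ L, r • l ∈ K := by
  constructor
  · intro h l hl
    have := h _ (Submodule.mem_map_of_mem hl)
    rwa [← map_smul, Submodule.mkQ_mem_map_mkQ_iff hTK] at this
  · rintro h _ ⟨l, hl, rfl⟩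
    rw [← map_smul, Submodule.mkQ_mem_map_mkQ_iff hTK]
    exact h l hl

end Quotient

section Theorems

variable {G : Type*} [AddGroup G] [DecidableEq G]
variable {A : Type*} [Ring A] {M : Type*} [AddCommGroup M] [Module A M]
variable (𝒜 : G → AddSubgroup A) (ℳ : G → AddSubgroup M)
variable [SetLike.GradedMonoid 𝒜] [SetLike.GradedSMul 𝒜 ℳ]
variable [DirectSum.Decomposition 𝒜] [DirectSum.Decomposition ℳ]

theorem stmt7 (T K : Submodule A M) (hTK : T < K) (hKtop : K ≠ ⊤)
    (hKgr : IsGrSub ℳ K) (hT : IsGCWP 𝒜 ℳ T)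
    (hquot : IsGCWP 𝒜 (fun g => (ℳ g).map T.mkQ.toAddMonoidHom) (K.map T.mkQ)) :
    IsGCWP 𝒜 ℳ K := by
  obtain ⟨-, -, hTprime⟩ := hT
  obtain ⟨-, -, hQprime⟩ := hquot
  refine ⟨hKtop, hKgr, fun x y hx hy L hL hne hmem => ?_⟩
  by_cases hinT : ∀ a : A, ∀ l ∈ L, (x * a * y) • l ∈ T
  · exact (hTprime x y hx hy L hL hne hinT).imp
      (fun h l hl => hTK.le (h l hl)) (fun h l hl => hTK.le (h l hl))
  · push Not at hinT
    obtain ⟨a, l, hl, hlT⟩ := hinT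
    have hneQ : ∃ b : A, ∃ l' ∈ L.map T.mkQ, (x * b * y) • l' ≠ 0 :=
      ⟨a, T.mkQ l, ⟨l, hl, rfl⟩, by
        rwa [← map_smul, Ne, Submodule.mkQ_apply, Submodule.Quotient.mk_eq_zero]⟩
    simp only [← Submodule.forall_smul_mem_map_mkQ_iff hTK.le L] at hmem ⊢
    exact hQprime x y hx hy _ (hL.map T.mkQ) hneQ hmem

end Theorems
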